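/- arXiv:2305.17986 — 3 statements merged into one kernel-verified Lean document; each statement's English description precedes it below -/
import Mathlib

section
/- Let μ be a real number, n ≥ 3 an integer, and define μ_k(t) = (2πk + t)^n + μ(2πk + t)^{n-2} for k ∈ ℤ and t ∈ ℝ. If n is odd, then for each pair of distinct real numbers μ_j ≠ μ_i and for all t ∈ [0, 2π), the functions satisfy: (2πk+t)^n + μ_j(2πk+t)^{n-2} ≠ (2πl+t)^n + μ_i(2πl+t)^{n-2} whenever (k, μ_j) ≠ (l, μ_i), provided |k| and |l| are sufficiently large (there exists N such that this holds for all |k|, |l| ≥ N). -/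
/-!
Put `x = 2πk + t` and `y = 2πl + t`. If `k = l` then `x = y ≠ 0` and the equation forces
`μj = μi`. Otherwise `|x - y| ≥ 2π ≥ 1`, and for odd `n` the gap `|x ^ n - y ^ n|` is at least
`M ^ (n - 1)` with `M = max |x| |y|` (for equal signs because `x ^ n` grows at rate `≥ M ^ (n - 1)`,
for opposite signs because then `|x ^ n - y ^ n| = |x| ^ n + |y| ^ n`). The equation bounds the
same gap by `(|μj| + |μi|) M ^ (n - 2)`, so `M` stays bounded, which fails once `|k|` is large.
-/

open Real

section OrderedRing

variable {R : Type*} [CommRing R] [LinearOrder R] [IsStrictOrderedRing R]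

theorem sub_mul_pow_pred_le_pow_sub {x y : R} {n : ℕ} (hn : n ≠ 0) (hy : 0 ≤ y) (hyx : y ≤ x) :
    (x - y) * x ^ (n - 1) ≤ x ^ n - y ^ n := by
  obtain ⟨m, rfl⟩ := Nat.exists_eq_succ_of_ne_zero hn
  have := pow_le_pow_left₀ hy hyx m
  simp only [Nat.succ_sub_one, pow_succ]
  nlinarith

theorem Odd.min_abs_sub_mul_pow_le_abs_pow_sub {n : ℕ} (hn : Odd n) (x y : R) :
    min |x - y| (max |x| |y|) * max |x| |y| ^ (n - 1) ≤ |x ^ n - y ^ n| := by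
  wlog hyx : |y| ≤ |x| generalizing x y
  · simpa only [abs_sub_comm, max_comm] using this y x (le_of_not_ge hyx)
  wlog hx : 0 ≤ x generalizing x y
  · simpa [← sub_eq_neg_add, hn.neg_pow, abs_sub_comm] using this (-x) (-y) (by simpa) (by linarith)
  rw [max_eq_left hyx, abs_of_nonneg hx]
  rcases le_or_gt 0 y with hy | hy
  · have hyx' : y ≤ x := (le_abs_self y).trans (hyx.trans_eq (abs_of_nonneg hx))
    calc min |x - y| x * x ^ (n - 1) ≤ (x - y) * x ^ (n - 1) := by
          gcongr
          exact (min_le_left _ _).trans_eq (abs_of_nonneg (sub_nonneg.2 hyx'))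
      _ ≤ x ^ n - y ^ n := sub_mul_pow_pred_le_pow_sub hn.pos.ne' hy hyx'
      _ ≤ |x ^ n - y ^ n| := le_abs_self _
  · have hyn : y ^ n < 0 := hn.pow_neg hy
    calc min |x - y| x * x ^ (n - 1) ≤ x * x ^ (n - 1) := by gcongr; exact min_le_right _ _
      _ = x ^ n := by rw [← pow_succ', Nat.sub_add_cancel hn.pos]
      _ ≤ |x ^ n - y ^ n| := by rw [abs_of_nonneg (by linarith [pow_nonneg hx n])]; linarith

theorem Odd.max_abs_le_of_pow_add_mul_pow_eq {n : ℕ} (hn : Odd n) (h2 : 2 ≤ n) {a b x y : R}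
    (hxy : 1 ≤ |x - y|) (h : x ^ n + a * x ^ (n - 2) = y ^ n + b * y ^ (n - 2)) :
    max |x| |y| ≤ max 1 (|a| + |b|) := by
  set M := max |x| |y|
  by_contra! hM
  obtain ⟨hM1, hMab⟩ := max_lt_iff.1 hM
  have hpow : M ^ (n - 1) = M * M ^ (n - 2) := by
    rw [← pow_succ']; congr 1; omega
  have hlower : M ^ (n - 1) ≤ |x ^ n - y ^ n| :=
    calc M ^ (n - 1) = 1 * M ^ (n - 1) := (one_mul _).symm
      _ ≤ min |x - y| M * M ^ (n - 1) := by gcongr; exact le_min hxy hM1.le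
      _ ≤ |x ^ n - y ^ n| := hn.min_abs_sub_mul_pow_le_abs_pow_sub x y
  have hupper : |x ^ n - y ^ n| ≤ (|a| + |b|) * M ^ (n - 2) :=
    calc |x ^ n - y ^ n| = |b * y ^ (n - 2) - a * x ^ (n - 2)| := by
          congr 1; linarith
      _ ≤ |b| * |y| ^ (n - 2) + |a| * |x| ^ (n - 2) := by
          simpa only [abs_mul, abs_pow] using abs_sub (b * y ^ (n - 2)) (a * x ^ (n - 2))
      _ ≤ |b| * M ^ (n - 2) + |a| * M ^ (n - 2) := by
          gcongr
          exacts [le_max_right _ _, le_max_left _ _]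
      _ = (|a| + |b|) * M ^ (n - 2) := by ring
  have hMpos : 0 < M ^ (n - 2) := pow_pos (by linarith) _
  nlinarith

end OrderedRing

theorem lt_abs_two_pi_mul_add {c t : ℝ} {m : ℤ} (hc : 0 ≤ c) (hm : ⌈c⌉ + 2 ≤ |m|)
    (ht : t ∈ Set.Ico 0 (2 * π)) : max 1 c < |2 * π * m + t| := by
  have hm' : c + 2 ≤ |(m : ℝ)| := by
    have : ((⌈c⌉ + 2 : ℤ) : ℝ) ≤ |(m : ℝ)| := by exact_mod_cast hm
    push_cast at this
    linarith [Int.le_ceil c]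
  have hπ : 1 < 2 * π := by linarith [pi_gt_three]
  calc max 1 c < 2 * π * (c + 1) := by
        rw [max_lt_iff]; constructor <;> nlinarith
    _ ≤ 2 * π * |(m : ℝ)| - 2 * π := by nlinarith
    _ ≤ |2 * π * m| - |t| := by
        rw [abs_mul, abs_of_pos (by positivity : (0 : ℝ) < 2 * π), abs_of_nonneg ht.1]
        linarith [ht.2]
    _ ≤ |2 * π * m + t| := abs_sub_abs_le_abs_add _ _

theorem odd_n_no_exceptional_points (n : ℕ) (hn : 3 ≤ n) (hodd : Odd n)
    (μj μi : ℝ) (hμ : μj ≠ μi) :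
    ∃ N : ℤ, ∀ k l : ℤ, N ≤ |k| → N ≤ |l| →
      ∀ t ∈ Set.Ico (0:ℝ) (2 * π),
        ((k, μj) ≠ (l, μi)) →
        (2 * π * k + t) ^ n + μj * (2 * π * k + t) ^ (n - 2) ≠
          (2 * π * l + t) ^ n + μi * (2 * π * l + t) ^ (n - 2) := by
  refine ⟨⌈|μj| + |μi|⌉ + 2, fun k l hk _ t ht _ heq => ?_⟩
  have hk_large := lt_abs_two_pi_mul_add (by positivity) hk ht
  rcases eq_or_ne k l with rfl | hkl
  · have hx : (2 * π * k + t) ^ (n - 2) ≠ 0 :=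
      pow_ne_zero _ (abs_pos.1 ((zero_lt_one.trans_le (le_max_left _ _)).trans hk_large))
    exact hμ (mul_right_cancel₀ hx (add_left_cancel heq))
  · have hsep : 1 ≤ |(2 * π * k + t) - (2 * π * l + t)| := by
      have hkl' : (1 : ℝ) ≤ |(k : ℝ) - l| := by exact_mod_cast Int.one_le_abs (sub_ne_zero.2 hkl)
      rw [show (2 * π * k + t) - (2 * π * l + t) = 2 * π * (k - l) by ring, abs_mul,
        abs_of_pos (by positivity : (0 : ℝ) < 2 * π)]
      nlinarith [pi_gt_three]
    have hbound := hodd.max_abs_le_of_pow_add_mul_pow_eq (by omega) hsep heq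
    exact (hk_large.trans_le (le_max_left _ _)).not_ge hbound
end

section
/- Suppose γ_1, ..., γ_m : [a, b] → ℂ are continuous curves with m odd, Re(γ_l(a)) < λ and Re(γ_l(b)) > λ for each l (for a fixed real number λ), and the m-tuple of curves is closed under complex conjugation at each parameter value: for every t ∈ [a,b] and every l there exists s with γ_s(t) = conj(γ_l(t)), and this pairing is multiplicity-preserving (the multiset {γ_1(t),...,γ_m(t)} is invariant under complex conjugation for each t). Then there exists l and t ∈ [a,b] with γ_l(t) = λ. -/
/-!
The product `P t = ∏ l, (γ l t - λ)` is continuous and, since the values at time `t` are closed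
under conjugation, real. At any time, a non-real value pairs off with its conjugate and contributes
`|γ l t - λ|² > 0` to `P t`, so the sign of `P t` is the sign of the product over the real values.
At `a` these factors are all negative and there is an odd number of them (`m` minus the paired
values), so `P a < 0`; at `b` they are all positive, so `P b > 0`. The intermediate value theorem
gives a zero of `P`, i.e. some `γ l t = λ`.
-/

open ComplexOrder

namespace Multiset

theorem map_conj_map_of_map_conj_eq_self {S : Multiset ℂ} (hS : S.map (starRingEnd ℂ) = S)
    {f : ℂ → ℂ} (hf : ∀ z, starRingEnd ℂ (f z) = f (starRingEnd ℂ z)) :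
    (S.map f).map (starRingEnd ℂ) = S.map f := by
  conv_rhs => rw [← hS]
  simp only [Multiset.map_map, Function.comp_def, hf]

theorem conj_prod_of_map_conj_eq_self {S : Multiset ℂ} (hS : S.map (starRingEnd ℂ) = S) :
    starRingEnd ℂ S.prod = S.prod := by
  rw [map_multiset_prod, hS]

theorem prod_pos_of_map_conj_eq_self (S : Multiset ℂ) (hS : S.map (starRingEnd ℂ) = S)
    (hpos : ∀ z ∈ S, z.im = 0 → 0 < z.re) : 0 < S.prod := by
  induction S using Multiset.strongInductionOn with
  | ih S ih =>
  rcases S.empty_or_exists_mem with rfl | ⟨z, hz⟩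
  · simp
  by_cases hzim : z.im = 0
  · have hzconj : starRingEnd ℂ z = z := Complex.conj_eq_iff_im.mpr hzim
    have hrest : 0 < (S.erase z).prod := by
      refine ih _ (erase_lt.mpr hz) ?_ fun w hw => hpos w (mem_of_mem_erase hw)
      rw [map_erase _ (starRingEnd ℂ).injective, hS, hzconj]
    rw [← prod_erase hz]
    exact mul_pos (Complex.lt_def.mpr ⟨by simpa using hpos z hz hzim, by simpa using hzim.symm⟩)
      hrest
  · have hne : starRingEnd ℂ z ≠ z := fun h => hzim (Complex.conj_eq_iff_im.mp h)
    have hconj_mem : starRingEnd ℂ z ∈ S.erase z := by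
      rw [mem_erase_of_ne hne, ← hS]
      exact mem_map_of_mem _ hz
    set T := (S.erase z).erase (starRingEnd ℂ z)
    have hrest : 0 < T.prod := by
      refine ih _ ((erase_lt.mpr hconj_mem).trans (erase_lt.mpr hz)) ?_
        fun w hw => hpos w (mem_of_mem_erase (mem_of_mem_erase hw))
      rw [map_erase _ (starRingEnd ℂ).injective, map_erase _ (starRingEnd ℂ).injective, hS,
        Complex.conj_conj, erase_comm]
    have hz0 : z ≠ 0 := fun h => hzim (by simp [h])
    rw [← prod_erase hz, ← prod_erase hconj_mem, ← mul_assoc, Complex.mul_conj]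
    exact mul_pos (Complex.zero_lt_real.mpr (Complex.normSq_pos.mpr hz0)) hrest

theorem prod_neg_of_map_conj_eq_self (S : Multiset ℂ) (hS : S.map (starRingEnd ℂ) = S)
    (hodd : Odd (card S)) (hneg : ∀ z ∈ S, z.im = 0 → z.re < 0) : S.prod < 0 := by
  have h := prod_pos_of_map_conj_eq_self (S.map Neg.neg)
    (map_conj_map_of_map_conj_eq_self hS fun z => map_neg _ z)
    (by simpa using fun z hz hzim => hneg z hz hzim)
  rwa [prod_map_neg, hodd.neg_one_pow, neg_one_mul, neg_pos] at h

end Multiset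

theorem odd_family_of_conjugation_symmetric_curves_hits_real_point
    (m : ℕ) (hm : Odd m) (a b : ℝ) (hab : a < b) (lam : ℝ)
    (γ : Fin m → ℝ → ℂ)
    (hcont : ∀ l, ContinuousOn (γ l) (Set.Icc a b))
    (ha : ∀ l, (γ l a).re < lam)
    (hb : ∀ l, (γ l b).re > lam)
    (hsym : ∀ t ∈ Set.Icc a b,
      Multiset.map (starRingEnd ℂ) (Multiset.map (fun l => γ l t) Finset.univ.val) =
        Multiset.map (fun l => γ l t) Finset.univ.val) :
    ∃ l, ∃ t ∈ Set.Icc a b, γ l t = (lam : ℂ) := by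
  set S : ℝ → Multiset ℂ := fun t => (Finset.univ.val.map fun l => γ l t).map (· - (lam : ℂ))
  have hS : ∀ t ∈ Set.Icc a b, (S t).map (starRingEnd ℂ) = S t := fun t ht =>
    Multiset.map_conj_map_of_map_conj_eq_self (hsym t ht) fun z => by simp
  have hprod : ∀ t, (S t).prod = ∏ l, (γ l t - lam) := fun t => by
    simp [S, Finset.prod_eq_multiset_prod, Function.comp_def]
  have hmem : ∀ t z, z ∈ S t ↔ ∃ l, γ l t - lam = z := fun t z => by simp [S]
  have hcard : ∀ t, Multiset.card (S t) = m := fun t => by simp [S]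
  have hleft := Multiset.prod_neg_of_map_conj_eq_self (S a) (hS a (Set.left_mem_Icc.mpr hab.le))
    (by rwa [hcard]) fun z hz _ => by
      obtain ⟨l, rfl⟩ := (hmem a z).mp hz; simpa using ha l
  have hright := Multiset.prod_pos_of_map_conj_eq_self (S b) (hS b (Set.right_mem_Icc.mpr hab.le))
    fun z hz _ => by
      obtain ⟨l, rfl⟩ := (hmem b z).mp hz; simpa using hb l
  have hPcont : ContinuousOn (fun t => ((S t).prod).re) (Set.Icc a b) := by
    simp only [hprod]
    exact Complex.continuous_re.comp_continuousOn
      (continuousOn_finsetProd _ fun l _ => (hcont l).sub continuousOn_const)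
  obtain ⟨t, ht, hzero_re⟩ := intermediate_value_Icc hab.le hPcont
    ⟨(Complex.lt_def.mp hleft).1.le, (Complex.lt_def.mp hright).1.le⟩
  have hzero : (S t).prod = 0 := Complex.ext hzero_re
    (Complex.conj_eq_iff_im.mp (Multiset.conj_prod_of_map_conj_eq_self (hS t ht)))
  obtain ⟨l, hl⟩ := (hmem t 0).mp (Multiset.prod_eq_zero_iff.mp hzero)
  exact ⟨l, t, ht, sub_eq_zero.mp hl⟩
end

section
/- Let n ≥ 3 and let (a_l)_{l ∈ ℤ} be a sequence of nonnegative reals. If a_l ≤ c·|l|^{n-2}·|k|^{n-2} / (||k| − |l||·(|k|^{n-1} + |l|^{n-1})) for all l ∈ ℤ with |l| ≠ |k| (k a fixed positive integer, c > 0 a constant), then ∑_{l: |l| ≠ |k|} a_l² ≤ c'·k^{2n-6} for a constant c' depending only on c and n. -/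
/-!
With `K = k` and `x = |l|`, the elementary inequality `(x K)^(p+1) ≤ K^p (K^(p+2) + x^(p+2))`
(compare `x` with `K`) reduces the hypothesis, for `n = p + 3`, to `a l ≤ c K^p / |K - |l||`.
Hence `a l ^ 2 ≤ c² K^(2p) / (K - |l|)²`, and `1 / (K - |l|)²` is dominated by
`1 / (l - K)² + 1 / (l + K)²`, whose sum over `ℤ` is `2 π² / 3` independently of `K`.
-/

open Real

lemma pow_succ_mul_pow_succ_le {x y : ℝ} (hx : 0 ≤ x) (hy : 0 ≤ y) (p : ℕ) :
    x ^ (p + 1) * y ^ (p + 1) ≤ y ^ p * (y ^ (p + 2) + x ^ (p + 2)) := by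
  rcases le_total x y with hxy | hyx
  · calc x ^ (p + 1) * y ^ (p + 1) ≤ y ^ (p + 1) * y ^ (p + 1) := by gcongr
      _ = y ^ p * y ^ (p + 2) := by ring
      _ ≤ y ^ p * (y ^ (p + 2) + x ^ (p + 2)) := by
        gcongr; exact le_add_of_nonneg_right (by positivity)
  · calc x ^ (p + 1) * y ^ (p + 1) = y ^ p * (x ^ (p + 1) * y) := by ring
      _ ≤ y ^ p * (x ^ (p + 1) * x) := by gcongr
      _ = y ^ p * x ^ (p + 2) := by ring
      _ ≤ y ^ p * (y ^ (p + 2) + x ^ (p + 2)) := by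
        gcongr; exact le_add_of_nonneg_left (by positivity)

lemma mul_pow_succ_mul_pow_succ_div_le {c x y d : ℝ} (hc : 0 ≤ c) (hx : 0 ≤ x) (hy : 0 ≤ y)
    (hd : 0 ≤ d) (p : ℕ) :
    c * x ^ (p + 1) * y ^ (p + 1) / (d * (y ^ (p + 2) + x ^ (p + 2))) ≤ c * y ^ p / d := by
  rw [mul_comm d, ← div_div, mul_assoc, mul_div_assoc]
  gcongr
  exact div_le_of_le_mul₀ (by positivity) (by positivity) (pow_succ_mul_pow_succ_le hx hy p)

lemma one_div_sub_abs_sq_le (x y : ℝ) :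
    1 / (y - |x|) ^ 2 ≤ 1 / (x - y) ^ 2 + 1 / (x + y) ^ 2 := by
  rcases le_total 0 x with hx | hx
  · rw [abs_of_nonneg hx, ← neg_sub, neg_sq]
    exact le_add_of_nonneg_right (by positivity)
  · rw [abs_of_nonpos hx, sub_neg_eq_add, add_comm y]
    exact le_add_of_nonneg_left (by positivity)

lemma hasSum_one_div_int_sq : HasSum (fun l : ℤ => 1 / (l : ℝ) ^ 2) (π ^ 2 / 3) := by
  have h := HasSum.of_nat_of_neg (f := fun l : ℤ => 1 / (l : ℝ) ^ 2)
    (by simpa using hasSum_zeta_two) (by simpa using hasSum_zeta_two)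
  rwa [show π ^ 2 / 6 + π ^ 2 / 6 - 1 / ((0 : ℤ) : ℝ) ^ 2 = π ^ 2 / 3 by norm_num; ring] at h

lemma hasSum_one_div_int_sub_sq (m : ℤ) :
    HasSum (fun l : ℤ => 1 / ((l : ℝ) - m) ^ 2) (π ^ 2 / 3) := by
  rw [← (Equiv.addRight m).hasSum_iff]
  simpa [Function.comp_def] using hasSum_one_div_int_sq

lemma hasSum_one_div_int_sub_sq_add_one_div_int_add_sq (m : ℤ) :
    HasSum (fun l : ℤ => 1 / ((l : ℝ) - m) ^ 2 + 1 / ((l : ℝ) + m) ^ 2) (2 * π ^ 2 / 3) := by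
  have h := (hasSum_one_div_int_sub_sq m).add (hasSum_one_div_int_sub_sq (-m))
  simp only [Int.cast_neg, sub_neg_eq_add] at h
  convert h using 1
  ring

theorem sum_sq_estimate (n : ℕ) (hn : 3 ≤ n) (c : ℝ) (hc : 0 < c) :
    ∃ c' : ℝ, 0 < c' ∧
      ∀ k : ℕ, 0 < k → ∀ a : ℤ → ℝ, (∀ l, 0 ≤ a l) →
        (∀ l : ℤ, |l| ≠ (k : ℤ) →
          a l ≤ c * |(l : ℝ)| ^ (n - 2) * (k : ℝ) ^ (n - 2) /
            (abs ((k : ℝ) - |(l : ℝ)|) * ((k : ℝ) ^ (n - 1) + |(l : ℝ)| ^ (n - 1)))) →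
        (∑' l : ℤ, if |l| ≠ (k : ℤ) then a l ^ 2 else 0) ≤ c' * (k : ℝ) ^ (2 * n - 6) := by
  obtain ⟨p, rfl⟩ : ∃ p, n = p + 3 := ⟨n - 3, by omega⟩
  refine ⟨c ^ 2 * (2 * π ^ 2 / 3), by positivity, fun k _ a ha hb => ?_⟩
  have hG := (hasSum_one_div_int_sub_sq_add_one_div_int_add_sq k).mul_left ((c * (k : ℝ) ^ p) ^ 2)
  have hle : ∀ l : ℤ, (if |l| ≠ (k : ℤ) then a l ^ 2 else 0) ≤
      (c * (k : ℝ) ^ p) ^ 2 * (1 / ((l : ℝ) - (k : ℤ)) ^ 2 + 1 / ((l : ℝ) + (k : ℤ)) ^ 2) := by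
    intro l
    split_ifs with hl
    · have hal : a l ≤ c * (k : ℝ) ^ p / abs ((k : ℝ) - |(l : ℝ)|) :=
        (hb l hl).trans (mul_pow_succ_mul_pow_succ_div_le hc.le (abs_nonneg _) k.cast_nonneg
          (abs_nonneg _) p)
      calc a l ^ 2 ≤ (c * (k : ℝ) ^ p / abs ((k : ℝ) - |(l : ℝ)|)) ^ 2 :=
          pow_le_pow_left₀ (ha l) hal 2
        _ = (c * (k : ℝ) ^ p) ^ 2 * (1 / ((k : ℝ) - |(l : ℝ)|) ^ 2) := by
          rw [div_pow, sq_abs, mul_one_div]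
        _ ≤ _ := by push_cast; gcongr; exact one_div_sub_abs_sq_le _ _
    · positivity
  have hnonneg : ∀ l : ℤ, 0 ≤ (if |l| ≠ (k : ℤ) then a l ^ 2 else 0) := by
    intro l
    split_ifs <;> positivity
  calc (∑' l : ℤ, if |l| ≠ (k : ℤ) then a l ^ 2 else 0)
      ≤ (c * (k : ℝ) ^ p) ^ 2 * (2 * π ^ 2 / 3) :=
        hasSum_le hle (Summable.of_nonneg_of_le hnonneg hle hG.summable).hasSum hG
    _ = c ^ 2 * (2 * π ^ 2 / 3) * (k : ℝ) ^ (2 * (p + 3) - 6) := by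
        rw [show 2 * (p + 3) - 6 = 2 * p by omega, pow_mul']; ring
end
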